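/- arXiv:1508.01552 — 2 statements merged into one kernel-verified Lean document; each statement's English description precedes it below -/
import Mathlib

section
/- Let $I \in \{0,1\}^k$ with $\hat{I} = \{\nu : i_\nu = 1\}$ of even cardinality, and let $\mu$ be a probability measure on $\mathbb{R}^d$. If $h = (h_1, \ldots, h_k)$ is a tuple of oriented hyperplanes such that $h_{\nu_1} = h_{\nu_2}$ (as oriented hyperplanes) for all $\nu_1, \nu_2 \in \hat{I}$, then $f_I^\mu(h) = 1$, where $f_I^\mu(h) = \sum_{J \in \{0,1\}^k} (-1)^{|\hat{I} \cap \hat{J}|} \mu(\bigcap_{\nu=1}^k h_\nu^{j_\nu})$. -/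
/-!
A point `x` off all the hyperplanes lies in exactly one cell `⋂ ν, h_ν^{j_ν}`, the one whose
index `J_x` records on which side of each `h_ν` it lies. As `μ` ignores the hyperplanes, the
signed sum of the cell measures is the integral of `(-1)^{|Î ∩ Ĵ_x|}`. The hyperplanes indexed
by `Î` coincide, so `Ĵ_x` contains none or all of `Î`, and the sign is `1` because `|Î|` is even.
-/

open MeasureTheory Finset

section HalfspaceCells

variable {α ι : Type*}

def halfspaceCell (f : ι → α → ℝ) (c : ι → ℝ) (J : ι → Bool) : Set α :=
  ⋂ ν, if J ν then {x | f ν x ≤ c ν} else {x | c ν ≤ f ν x}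

noncomputable def cellIndex (f : ι → α → ℝ) (c : ι → ℝ) (x : α) : ι → Bool :=
  fun ν => decide (f ν x ≤ c ν)

theorem mem_halfspaceCell_iff {f : ι → α → ℝ} {c : ι → ℝ} {x : α} (hx : ∀ ν, f ν x ≠ c ν)
    (J : ι → Bool) : x ∈ halfspaceCell f c J ↔ J = cellIndex f c x := by
  simp only [halfspaceCell, cellIndex, Set.mem_iInter, funext_iff]
  refine forall_congr' fun ν => ?_
  rcases (hx ν).lt_or_gt with h | h <;> cases J ν <;> simp [h.le, h.not_ge]

theorem sum_indicator_halfspaceCell [Fintype ι] [DecidableEq ι] {f : ι → α → ℝ} {c : ι → ℝ}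
    {x : α} (hx : ∀ ν, f ν x ≠ c ν) (s : (ι → Bool) → ℝ) :
    ∑ J, (halfspaceCell f c J).indicator (fun _ => s J) x = s (cellIndex f c x) := by
  classical
  simp only [Set.indicator_apply, mem_halfspaceCell_iff hx, sum_ite_eq', mem_univ, if_true]

variable [MeasurableSpace α]

theorem measurableSet_halfspaceCell [Countable ι] {f : ι → α → ℝ} (hf : ∀ ν, Measurable (f ν))
    (c : ι → ℝ) (J : ι → Bool) : MeasurableSet (halfspaceCell f c J) := by
  refine .iInter fun ν => ?_
  split
  · exact measurableSet_le (hf ν) measurable_const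
  · exact measurableSet_le measurable_const (hf ν)

theorem sum_mul_measureReal_halfspaceCell [Fintype ι] [DecidableEq ι] {μ : Measure α}
    [IsFiniteMeasure μ] {f : ι → α → ℝ} (hf : ∀ ν, Measurable (f ν)) {c : ι → ℝ}
    (hnull : ∀ ν, μ {x | f ν x = c ν} = 0) (s : (ι → Bool) → ℝ) :
    ∑ J, s J * μ.real (halfspaceCell f c J) = ∫ x, s (cellIndex f c x) ∂μ := by
  have hoff : ∀ᵐ x ∂μ, ∀ ν, f ν x ≠ c ν :=
    ae_all_iff.2 fun ν => measure_eq_zero_iff_ae_notMem.1 (hnull ν)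
  calc ∑ J, s J * μ.real (halfspaceCell f c J)
      = ∑ J, ∫ x, (halfspaceCell f c J).indicator (fun _ => s J) x ∂μ := by
        refine sum_congr rfl fun J _ => ?_
        rw [integral_indicator_const _ (measurableSet_halfspaceCell hf c J), smul_eq_mul, mul_comm]
    _ = ∫ x, ∑ J, (halfspaceCell f c J).indicator (fun _ => s J) x ∂μ :=
        (integral_finsetSum _ fun J _ =>
          (integrable_const (s J)).indicator (measurableSet_halfspaceCell hf c J)).symm
    _ = ∫ x, s (cellIndex f c x) ∂μ :=
        integral_congr_ae (hoff.mono fun x hx => sum_indicator_halfspaceCell hx s)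

end HalfspaceCells

theorem neg_one_pow_card_filter_and_eq_one {ι R : Type*} [Fintype ι] [Monoid R] [HasDistribNeg R]
    {I J : ι → Bool} (hI : Even (univ.filter fun ν => I ν = true).card)
    (hJ : ∀ ν₁ ν₂, I ν₁ = true → I ν₂ = true → J ν₁ = J ν₂) :
    (-1 : R) ^ (univ.filter fun ν => I ν = true ∧ J ν = true).card = 1 := by
  by_cases h : ∃ ν₀, I ν₀ = true ∧ J ν₀ = true
  · obtain ⟨ν₀, hI₀, hJ₀⟩ := h
    have hfilter : (univ.filter fun ν => I ν = true ∧ J ν = true) =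
        univ.filter fun ν => I ν = true :=
      filter_congr fun ν _ => ⟨And.left, fun hIν => ⟨hIν, (hJ ν ν₀ hIν hI₀).trans hJ₀⟩⟩
    rw [hfilter, hI.neg_one_pow]
  · rw [filter_false_of_mem fun ν _ => not_exists.1 h ν, card_empty, pow_zero]

theorem stmt_2_general (d k : ℕ) (μ : Measure (Fin d → ℝ)) [IsProbabilityMeasure μ]
    (w : Fin k → Fin d → ℝ) (c : Fin k → ℝ)
    (hnull : ∀ ν, μ {x | ∑ i, w ν i * x i = c ν} = 0)
    (I : Fin k → Bool)
    (hIeven : Even (Finset.univ.filter (fun ν => I ν = true)).card)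
    (hcoin : ∀ ν₁ ν₂, I ν₁ = true → I ν₂ = true → w ν₁ = w ν₂ ∧ c ν₁ = c ν₂) :
    ∑ J : Fin k → Bool,
      (-1 : ℝ) ^ (Finset.univ.filter (fun ν => I ν = true ∧ J ν = true)).card *
        (μ (⋂ ν, if J ν then {x | ∑ i, w ν i * x i ≤ c ν}
                 else {x | c ν ≤ ∑ i, w ν i * x i})).toReal = 1 := by
  set f : Fin k → (Fin d → ℝ) → ℝ := fun ν x => ∑ i, w ν i * x i
  have hf : ∀ ν, Measurable (f ν) := fun ν => by fun_prop
  have hsign : ∀ x, (-1 : ℝ) ^ (univ.filter fun ν => I ν = true ∧ cellIndex f c x ν = true).card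
      = 1 := fun x => neg_one_pow_card_filter_and_eq_one hIeven fun ν₁ ν₂ h₁ h₂ => by
    obtain ⟨hw, hc⟩ := hcoin ν₁ ν₂ h₁ h₂
    simp only [cellIndex, f, hw, hc]
  calc _ = ∫ x, (-1 : ℝ) ^ (univ.filter fun ν => I ν = true ∧ cellIndex f c x ν = true).card ∂μ :=
        sum_mul_measureReal_halfspaceCell hf hnull
          (fun J => (-1 : ℝ) ^ (univ.filter fun ν => I ν = true ∧ J ν = true).card)
    _ = 1 := by simp only [hsign, integral_const, probReal_univ, smul_eq_mul, mul_one]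

/-- Ramos' shielding function property: if `|Î|` is even, `μ` is a probability
measure on ℝ^d vanishing on hyperplanes, and the oriented hyperplanes indexed by
`Î` all coincide, then `f_I^μ(h) = ∑_J (-1)^{|Î ∩ Ĵ|} μ(h₁^{j₁} ∩ ⋯ ∩ h_k^{j_k}) = 1`. -/
theorem stmt_2 (d k : ℕ) (μ : Measure (Fin d → ℝ)) [IsProbabilityMeasure μ]
    (w : Fin k → Fin d → ℝ) (c : Fin k → ℝ) (hw : ∀ ν, w ν ≠ 0)
    (hnull : ∀ ν, μ {x | ∑ i, w ν i * x i = c ν} = 0)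
    (I : Fin k → Bool)
    (hIeven : Even (Finset.univ.filter (fun ν => I ν = true)).card)
    (hcoin : ∀ ν₁ ν₂, I ν₁ = true → I ν₂ = true → w ν₁ = w ν₂ ∧ c ν₁ = c ν₂) :
    ∑ J : Fin k → Bool,
      (-1 : ℝ) ^ (Finset.univ.filter (fun ν => I ν = true ∧ J ν = true)).card *
        (μ (⋂ ν, if J ν then {x | ∑ i, w ν i * x i ≤ c ν}
                 else {x | c ν ≤ ∑ i, w ν i * x i})).toReal = 1 :=
  stmt_2_general d k μ w c hnull I hIeven hcoin
end

section
/- Suppose that for every pair of continuous finite Borel measures $\nu_1, \nu_2$ on $\mathbb{R}^5$ there exist $3$ hyperplanes equipartitioning both (each of the $8$ hyperorthants gets $1/8$ of each measure). Then every continuous finite Borel measure $\mu$ on $\mathbb{R}^5$ admits an equipartition by $4$ hyperplanes (each of the $16$ hyperorthants gets $1/16$ of $\mu$). -/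
/-!
Bisect `μ` by a hyperplane `H`, possible because the distribution function of an atomless finite
measure on `ℝ` is continuous and so takes the value `1/2` of the total mass. The restrictions of
`μ` to the two closed sides of `H` are again finite and give no mass to hyperplanes, so the
hypothesis equipartitions both of them into eighths by three common hyperplanes; together with `H`
these cut `μ` into sixteen equal parts.
-/

open MeasureTheory Set

theorem StieltjesFunction.continuous_of_measure_singleton (f : StieltjesFunction ℝ)
    (hf : ∀ a, f.measure {a} = 0) : Continuous f := by
  refine continuous_iff_continuousAt.2 fun a => ?_
  rw [f.mono.continuousAt_iff_leftLim_eq_rightLim, f.rightLim_eq]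
  have h := f.measure_singleton a
  rw [hf a, eq_comm, ENNReal.ofReal_eq_zero, sub_nonpos] at h
  exact le_antisymm (f.mono.leftLim_le le_rfl) h

theorem exists_measure_Iic_and_Ici_eq_half (ν : Measure ℝ) [IsFiniteMeasure ν]
    [NullSingletonClass ν] : ∃ c, ν (Iic c) = ν univ / 2 ∧ ν (Ici c) = ν univ / 2 := by
  suffices h : ∃ c, ν (Iic c) = ν univ / 2 by
    obtain ⟨c, hc⟩ := h
    refine ⟨c, hc, ?_⟩
    rw [← measure_congr Ioi_ae_eq_Ici, ← compl_Iic,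
      measure_compl measurableSet_Iic (measure_ne_top _ _), hc,
      ENNReal.sub_half (measure_ne_top _ _)]
  rcases eq_zero_or_neZero ν with rfl | _
  · exact ⟨0, by simp⟩
  set p := (ν univ)⁻¹ • ν
  have hp : ∀ a, (ProbabilityTheory.cdf p).measure {a} = 0 := fun a => by
    simp [ProbabilityTheory.measure_cdf, p]
  obtain ⟨c, hc⟩ : ∃ c, ProbabilityTheory.cdf p c = 2⁻¹ :=
    intermediate_value_univ₂_eventually₂ (l₁ := Filter.atBot) (l₂ := Filter.atTop)
      ((ProbabilityTheory.cdf p).continuous_of_measure_singleton hp) continuous_const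
      ((ProbabilityTheory.tendsto_cdf_atBot p).eventually_le_const (by norm_num))
      ((ProbabilityTheory.tendsto_cdf_atTop p).eventually_const_le (by norm_num))
  have hpc : (ν univ)⁻¹ * ν (Iic c) = 2⁻¹ := by
    rw [← smul_eq_mul, ← Measure.smul_apply, ← ProbabilityTheory.ofReal_cdf, hc,
      ENNReal.ofReal_inv_of_pos two_pos, ENNReal.ofReal_ofNat]
  refine ⟨c, ?_⟩
  rw [div_eq_mul_inv, ← hpc, ← mul_assoc,
    ENNReal.mul_inv_cancel (NeZero.ne _) (measure_ne_top _ _), one_mul]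

theorem exists_measure_le_and_ge_eq_half {E : Type*} [MeasurableSpace E] (μ : Measure E)
    [IsFiniteMeasure μ] {f : E → ℝ} (hf : Measurable f) (hμf : ∀ c, μ (f ⁻¹' {c}) = 0) :
    ∃ c, μ {x | f x ≤ c} = μ univ / 2 ∧ μ {x | c ≤ f x} = μ univ / 2 := by
  have : NullSingletonClass (μ.map f) := ⟨fun c => by
    rw [Measure.map_apply hf (measurableSet_singleton c)]; exact hμf c⟩
  obtain ⟨c, hIic, hIci⟩ := exists_measure_Iic_and_Ici_eq_half (μ.map f)
  rw [Measure.map_apply hf measurableSet_Iic, Measure.map_apply hf MeasurableSet.univ] at hIic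
  rw [Measure.map_apply hf measurableSet_Ici, Measure.map_apply hf MeasurableSet.univ] at hIci
  exact ⟨c, hIic, hIci⟩

section Hyperplanes

variable {n k : ℕ}

def halfSpace (w : Fin n → ℝ) (c : ℝ) (b : Bool) : Set (Fin n → ℝ) :=
  if b then {x | ∑ i, w i * x i ≤ c} else {x | c ≤ ∑ i, w i * x i}

def orthant (w : Fin k → Fin n → ℝ) (c : Fin k → ℝ) (s : Fin k → Bool) : Set (Fin n → ℝ) :=
  ⋂ j, halfSpace (w j) (c j) (s j)

def NullHyperplanes (μ : Measure (Fin n → ℝ)) : Prop :=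
  ∀ (w : Fin n → ℝ) (c : ℝ), w ≠ 0 → μ {x | ∑ i, w i * x i = c} = 0

def IsHyperplaneEquipartition (μ : Measure (Fin n → ℝ)) (w : Fin k → Fin n → ℝ)
    (c : Fin k → ℝ) : Prop :=
  ∀ s, μ (orthant w c s) = μ univ / 2 ^ k

theorem measurableSet_halfSpace (w : Fin n → ℝ) (c : ℝ) (b : Bool) :
    MeasurableSet (halfSpace w c b) := by
  cases b <;> exact measurableSet_le (by fun_prop) (by fun_prop)

theorem orthant_cons (w₀ : Fin n → ℝ) (c₀ : ℝ) (w : Fin k → Fin n → ℝ) (c : Fin k → ℝ)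
    (s : Fin (k + 1) → Bool) :
    orthant (Fin.cons w₀ w) (Fin.cons c₀ c) s =
      halfSpace w₀ c₀ (s 0) ∩ orthant w c (Fin.tail s) := by
  ext x
  simp [orthant, Fin.forall_fin_succ, Fin.tail]

theorem NullHyperplanes.restrict {μ : Measure (Fin n → ℝ)} (hμ : NullHyperplanes μ)
    (s : Set (Fin n → ℝ)) : NullHyperplanes (μ.restrict s) :=
  fun w c hw => nonpos_iff_eq_zero.1 ((Measure.restrict_apply_le s _).trans_eq (hμ w c hw))

theorem NullHyperplanes.exists_measure_halfSpace_eq_half {μ : Measure (Fin n → ℝ)}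
    [IsFiniteMeasure μ] (hμ : NullHyperplanes μ) {w : Fin n → ℝ} (hw : w ≠ 0) :
    ∃ c, ∀ b, μ (halfSpace w c b) = μ univ / 2 := by
  obtain ⟨c, hle, hge⟩ := exists_measure_le_and_ge_eq_half μ (by fun_prop) fun c => hμ w c hw
  exact ⟨c, Bool.forall_bool.2 ⟨hge, hle⟩⟩

theorem IsHyperplaneEquipartition.cons {μ : Measure (Fin n → ℝ)} {w₀ : Fin n → ℝ} {c₀ : ℝ}
    (h₀ : ∀ b, μ (halfSpace w₀ c₀ b) = μ univ / 2) {w : Fin k → Fin n → ℝ} {c : Fin k → ℝ}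
    (h : ∀ b, IsHyperplaneEquipartition (μ.restrict (halfSpace w₀ c₀ b)) w c) :
    IsHyperplaneEquipartition μ (Fin.cons w₀ w) (Fin.cons c₀ c) := by
  intro s
  rw [orthant_cons, inter_comm, ← Measure.restrict_apply' (measurableSet_halfSpace _ _ _), h,
    Measure.restrict_apply_univ, h₀, div_eq_mul_inv, div_eq_mul_inv, div_eq_mul_inv, mul_assoc,
    ← ENNReal.mul_inv (by simp) (by simp), pow_succ']

end Hyperplanes

/-- If every pair of continuous finite Borel measures on ℝ⁵ admits a common
equipartition by 3 hyperplanes, then every continuous finite Borel measure on ℝ⁵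
admits an equipartition by 4 hyperplanes. -/
theorem stmt_16
    (H : ∀ (ν₁ ν₂ : Measure (Fin 5 → ℝ)), IsFiniteMeasure ν₁ → IsFiniteMeasure ν₂ →
      (∀ (w : Fin 5 → ℝ) (c : ℝ), w ≠ 0 → ν₁ {x | ∑ i, w i * x i = c} = 0) →
      (∀ (w : Fin 5 → ℝ) (c : ℝ), w ≠ 0 → ν₂ {x | ∑ i, w i * x i = c} = 0) →
      ∃ (w : Fin 3 → Fin 5 → ℝ) (c : Fin 3 → ℝ), (∀ j, w j ≠ 0) ∧
        ∀ s : Fin 3 → Bool,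
          ν₁ (⋂ j, if s j then {x | ∑ i, w j i * x i ≤ c j}
                   else {x | c j ≤ ∑ i, w j i * x i}) = ν₁ Set.univ / 8 ∧
          ν₂ (⋂ j, if s j then {x | ∑ i, w j i * x i ≤ c j}
                   else {x | c j ≤ ∑ i, w j i * x i}) = ν₂ Set.univ / 8) :
    ∀ (μ : Measure (Fin 5 → ℝ)), IsFiniteMeasure μ →
      (∀ (w : Fin 5 → ℝ) (c : ℝ), w ≠ 0 → μ {x | ∑ i, w i * x i = c} = 0) →
      ∃ (w : Fin 4 → Fin 5 → ℝ) (c : Fin 4 → ℝ), (∀ j, w j ≠ 0) ∧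
        ∀ s : Fin 4 → Bool,
          μ (⋂ j, if s j then {x | ∑ i, w j i * x i ≤ c j}
                  else {x | c j ≤ ∑ i, w j i * x i}) = μ Set.univ / 16 := by
  intro μ _ hμ
  obtain ⟨c₀, hc₀⟩ :=
    NullHyperplanes.exists_measure_halfSpace_eq_half hμ (one_ne_zero : (1 : Fin 5 → ℝ) ≠ 0)
  obtain ⟨w, c, hw, hwc⟩ := H (μ.restrict (halfSpace 1 c₀ true))
    (μ.restrict (halfSpace 1 c₀ false)) inferInstance inferInstance
    (NullHyperplanes.restrict hμ _) (NullHyperplanes.restrict hμ _)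
  have hsides : ∀ b, IsHyperplaneEquipartition (μ.restrict (halfSpace 1 c₀ b)) w c :=
    Bool.forall_bool.2 ⟨fun s => (hwc s).2.trans (by norm_num),
      fun s => (hwc s).1.trans (by norm_num)⟩
  refine ⟨Fin.cons 1 w, Fin.cons c₀ c, Fin.cases one_ne_zero hw, fun s => ?_⟩
  exact (IsHyperplaneEquipartition.cons hc₀ hsides s).trans (by norm_num)
end
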